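/- arXiv:1101.5067 — 3 statements merged into one kernel-verified Lean document; each statement's English description precedes it below -/
import Mathlib

section
/- Let X be a β-set, d ≥ 1, and S = s_d(X) the associated d-symbol. The map sending a hook (a,b) of X to the quadruple (a', b', i, j), where a = a'd + i and b = b'd + j with i, j ∈ {0,…,d−1}, is a bijection between the set H(X) of hooks of X and the set H(S) of hooks of S. -/
/-!
Division with remainder `a ↦ (a / d, a % d)` is a bijection `ℕ ≃ ℕ × Fin d` under which `a ∈ X`
becomes `a / d ∈ X_{a % d}^{(d)}`, and which turns the order of `ℕ` into the lexicographic order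
on `ℕ × Fin d`. The conditions `a ∈ X`, `b ∉ X`, `b < a` defining a hook of `X` therefore
translate one by one into the conditions defining a hook of `s_d(X)`.
-/

/-- `X^{+s} = (X + s) ∪ {0,…,s−1}` for a β-set `X`. -/
def shiftUp (X : Finset ℕ) (s : ℕ) : Finset ℕ :=
  X.image (· + s) ∪ Finset.range s

/-- The `d`-symbol `s_d(X)` associated to a β-set `X`:
`X_i^{(d)} = {k ∈ ℕ : i + k*d ∈ X}`. -/
def sd (d : ℕ) (X : Finset ℕ) : Fin d → Finset ℕ :=
  fun i => (X.filter fun a => a % d = (i : ℕ)).image fun a => a / d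

/-- The inverse of `s_d`, recovering the β-set of a `d`-symbol. -/
def sdInv (d : ℕ) (S : Fin d → Finset ℕ) : Finset ℕ :=
  Finset.univ.biUnion fun i => (S i).image fun k => (i : ℕ) + k * d

/-- Hooks of a β-set `X`: pairs `(a,b)` with `a > b`, `a ∈ X`, `b ∉ X`. -/
def betaHooks (X : Finset ℕ) : Finset (ℕ × ℕ) :=
  (X ×ˢ Finset.range (X.sup id + 1)).filter fun p => p.2 < p.1 ∧ p.2 ∉ X

/-- Hooks of a `d`-symbol `S`: quadruples `(a,b,i,j)` with `a ∈ S i`, `b ∉ S j`,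
and either `a > b`, or `a = b` and `i > j`. -/
def symbolHooks {d : ℕ} (S : Fin d → Finset ℕ) : Finset (ℕ × ℕ × Fin d × Fin d) :=
  (Finset.range ((Finset.univ.sup fun i => (S i).sup id) + 1) ×ˢ
      Finset.range ((Finset.univ.sup fun i => (S i).sup id) + 1) ×ˢ
      (Finset.univ : Finset (Fin d)) ×ˢ (Finset.univ : Finset (Fin d))).filter
    fun z => z.1 ∈ S z.2.2.1 ∧ z.2.1 ∉ S z.2.2.2 ∧
      (z.2.1 < z.1 ∨ (z.1 = z.2.1 ∧ z.2.2.2 < z.2.2.1))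

/-- The partition `p(X)` of a β-set `X = {a_1 > … > a_t}`, as the multiset of the
nonzero numbers among `a_i − (t−i)`; the element `a` contributes the part
`a − #{b ∈ X : b < a}`. -/
def partitionOf (X : Finset ℕ) : Multiset ℕ :=
  Multiset.filter (· ≠ 0) (X.val.map fun a => a - (X.filter (· < a)).card)

/-- `r`, the maximal number of parts among the partitions `p(X_i)` of a `d`-symbol. -/
def quotCard {d : ℕ} (S : Fin d → Finset ℕ) : ℕ :=
  Finset.univ.sup fun i => Multiset.card (partitionOf (S i))

/-- `Y` is the balanced quotient `Q(S)` of `S`: each `Y i` is the (unique) β-set of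
cardinality `r` with `p(Y i) = p(S i)`, where `r` is the maximal number of parts
among the `p(S i)`. -/
def IsBalancedQuotient {d : ℕ} (S Y : Fin d → Finset ℕ) : Prop :=
  ∀ i, (Y i).card = quotCard S ∧ partitionOf (Y i) = partitionOf (S i)

/-- The core `C(S) = ([x_0],…,[x_{d−1}])` of a `d`-symbol, `x_i = |X_i|`. -/
def coreSymbol {d : ℕ} (S : Fin d → Finset ℕ) : Fin d → Finset ℕ :=
  fun i => Finset.range (S i).card

/-- The `δ`-length `k(a−b) + c_i − c_j` of a hook `(a,b,i,j)`, for the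
`d`-hook data tuple `δ = (c_0,…,c_{d−1};k)`. -/
noncomputable def hookLen {d : ℕ} (c : Fin d → ℝ) (k : ℝ)
    (z : ℕ × ℕ × Fin d × Fin d) : ℝ :=
  k * ((z.1 - z.2.1 : ℕ) : ℝ) + c z.2.2.1 - c z.2.2.2

/-- The multiset `𝓗^δ(S)` of `δ`-lengths of all hooks of `S`. -/
noncomputable def hookLens {d : ℕ} (c : Fin d → ℝ) (k : ℝ)
    (S : Fin d → Finset ℕ) : Multiset ℝ :=
  (symbolHooks S).val.map (hookLen c k)

/-- `H_{ij}^ℓ(S)`, the set of hooks `(a,b,i,j)` of `S` with `a − b = ℓ`. -/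
def Hij {d : ℕ} (S : Fin d → Finset ℕ) (i j : Fin d) (ℓ : ℕ) :
    Finset (ℕ × ℕ × Fin d × Fin d) :=
  (symbolHooks S).filter fun z => z.2.2.1 = i ∧ z.2.2.2 = j ∧ z.1 - z.2.1 = ℓ

/-- The sign-modified length `h̄^{δ_S}` (on hooks of the balanced quotient), where
`x` records the cardinalities `x_i = |X_i|` of `S`, and `δ_S = (c_i + x_i k; k)`.
For a hook `z = (a,b,u,v)` with `ℓ = a − b`: relabelling so that `Δ = x_i − x_j ≥ 0`,
the sign is `+` if `z` lies in position `(i,j)`, or in position `(j,i)` with `ℓ > Δ`,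
or in position `(j,i)` with `ℓ = Δ` and `i < j`; otherwise the sign is `−`. -/
noncomputable def signedLen {d : ℕ} (x : Fin d → ℕ) (c : Fin d → ℝ) (k : ℝ)
    (z : ℕ × ℕ × Fin d × Fin d) : ℝ :=
  if x z.2.2.2 ≤ x z.2.2.1 then
    k * ((z.1 - z.2.1 : ℕ) : ℝ) + (c z.2.2.1 + (x z.2.2.1 : ℝ) * k)
      - (c z.2.2.2 + (x z.2.2.2 : ℝ) * k)
  else if x z.2.2.2 - x z.2.2.1 < z.1 - z.2.1 ∨
      (z.1 - z.2.1 = x z.2.2.2 - x z.2.2.1 ∧ (z.2.2.2 : ℕ) < (z.2.2.1 : ℕ)) then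
    k * ((z.1 - z.2.1 : ℕ) : ℝ) + (c z.2.2.1 + (x z.2.2.1 : ℝ) * k)
      - (c z.2.2.2 + (x z.2.2.2 : ℝ) * k)
  else
    -(k * ((z.1 - z.2.1 : ℕ) : ℝ) + (c z.2.2.1 + (x z.2.2.1 : ℝ) * k)
      - (c z.2.2.2 + (x z.2.2.2 : ℝ) * k))

/-- The permutation `σ_{d,ℓ,e}` of `ℕ`:
`σ(r(dℓ) + sd + t) = r(dℓ) + sd + ((t + re) mod d)`. -/
def twistFun (d ℓ e : ℕ) (n : ℕ) : ℕ :=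
  d * ℓ * (n / (d * ℓ)) + d * (n % (d * ℓ) / d) + (n % d + n / (d * ℓ) * e) % d

theorem mem_betaHooks {X : Finset ℕ} {p : ℕ × ℕ} :
    p ∈ betaHooks X ↔ p.1 ∈ X ∧ p.2 < p.1 ∧ p.2 ∉ X := by
  simp only [betaHooks, Finset.mem_filter, Finset.mem_product, Finset.mem_range]
  refine ⟨fun ⟨⟨ha, _⟩, hba, hb⟩ => ⟨ha, hba, hb⟩, fun ⟨ha, hba, hb⟩ => ⟨⟨ha, ?_⟩, hba, hb⟩⟩
  exact Nat.lt_succ_of_lt (hba.trans_le (Finset.le_sup (f := id) ha))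

theorem mem_symbolHooks {d : ℕ} {S : Fin d → Finset ℕ} {z : ℕ × ℕ × Fin d × Fin d} :
    z ∈ symbolHooks S ↔ z.1 ∈ S z.2.2.1 ∧ z.2.1 ∉ S z.2.2.2 ∧
      (z.2.1 < z.1 ∨ (z.1 = z.2.1 ∧ z.2.2.2 < z.2.2.1)) := by
  simp only [symbolHooks, Finset.mem_filter, Finset.mem_product, Finset.mem_range,
    Finset.mem_univ, and_true]
  refine ⟨And.right, fun h => ⟨?_, h⟩⟩
  obtain ⟨ha, -, hord⟩ := h
  have ha_le : z.1 ≤ Finset.univ.sup fun i => (S i).sup id :=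
    (Finset.le_sup (f := id) ha).trans
      (Finset.le_sup (f := fun i => (S i).sup id) (Finset.mem_univ _))
  have hb_le : z.2.1 ≤ Finset.univ.sup fun i => (S i).sup id := by
    rcases hord with hlt | ⟨heq, -⟩
    · exact hlt.le.trans ha_le
    · exact heq ▸ ha_le
  exact ⟨Nat.lt_succ_of_le ha_le, Nat.lt_succ_of_le hb_le⟩

theorem div_mem_sd_iff {d : ℕ} (hd : 0 < d) (X : Finset ℕ) (a : ℕ) :
    a / d ∈ sd d X ⟨a % d, Nat.mod_lt a hd⟩ ↔ a ∈ X := by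
  simp only [sd, Finset.mem_image, Finset.mem_filter]
  refine ⟨fun ⟨x, ⟨hx, hmod⟩, hdiv⟩ => ?_, fun ha => ⟨a, ⟨ha, rfl⟩, rfl⟩⟩
  rwa [← Nat.div_add_mod x d, hdiv, hmod, Nat.div_add_mod] at hx

theorem Nat.lt_iff_div_lt_or_div_eq_and_mod_lt {d : ℕ} {a b : ℕ} :
    b < a ↔ b / d < a / d ∨ a / d = b / d ∧ b % d < a % d := by
  have ha := Nat.div_add_mod a d
  have hb := Nat.div_add_mod b d
  rcases lt_trichotomy (b / d) (a / d) with hlt | heq | hgt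
  · simp only [hlt, true_or, iff_true]
    exact Nat.lt_of_div_lt_div hlt
  · rw [heq] at hb
    simp only [heq, lt_self_iff_false, true_and, false_or]
    omega
  · simp only [hgt.not_gt, hgt.ne, false_and, or_false, iff_false, not_lt]
    exact (Nat.lt_of_div_lt_div hgt).le

theorem divMod_mem_symbolHooks_sd_iff {d : ℕ} (hd : 0 < d) (X : Finset ℕ) (p : ℕ × ℕ) :
    ((p.1 / d, p.2 / d, ⟨p.1 % d, Nat.mod_lt _ hd⟩, ⟨p.2 % d, Nat.mod_lt _ hd⟩) :
        ℕ × ℕ × Fin d × Fin d) ∈ symbolHooks (sd d X) ↔ p ∈ betaHooks X := by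
  rw [mem_symbolHooks, mem_betaHooks, Nat.lt_iff_div_lt_or_div_eq_and_mod_lt (d := d) (a := p.1)]
  simp only [div_mem_sd_iff hd, Fin.mk_lt_mk]
  exact and_congr_right fun _ => and_comm

/-- Definitionally `(a, b) ↦ (a / d, b / d, a % d, b % d)`, the map of the theorem below. -/
def Nat.divModPairEquiv (d : ℕ) [NeZero d] : ℕ × ℕ ≃ ℕ × ℕ × Fin d × Fin d :=
  ((Nat.divModEquiv d).prodCongr (Nat.divModEquiv d)).trans
    ((Equiv.prodProdProdComm ℕ (Fin d) ℕ (Fin d)).trans (Equiv.prodAssoc ℕ ℕ (Fin d × Fin d)))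

/-- The map sending a hook `(a,b)` of the β-set `X` to `(a', b', i, j)`, where
`a = a'd + i`, `b = b'd + j` with `i, j ∈ {0,…,d−1}`, is a bijection between the
hooks of `X` and the hooks of the associated `d`-symbol `s_d(X)`. -/
theorem betaHooks_bijOn_symbolHooks (d : ℕ) (hd : 0 < d) (X : Finset ℕ) :
    Set.BijOn
      (fun p : ℕ × ℕ =>
        ((p.1 / d, p.2 / d, ⟨p.1 % d, Nat.mod_lt _ hd⟩, ⟨p.2 % d, Nat.mod_lt _ hd⟩) :
          ℕ × ℕ × Fin d × Fin d))
      (betaHooks X : Set (ℕ × ℕ))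
      (symbolHooks (sd d X) : Set (ℕ × ℕ × Fin d × Fin d)) := by
  have : NeZero d := ⟨hd.ne'⟩
  exact (Nat.divModPairEquiv d).bijOn (divMod_mem_symbolHooks_sd_iff hd X)
end

section
/- Let X be a β-set and d ≥ 1. Then |p(X)| = |q_d(X)| + |c_d(X)|, where q_d(X) = p(Q(s_d(X))) is the d-quotient partition of X and c_d(X) = p(C(s_d(X))) is the d-core partition of X. -/
open Finset

lemma Multiset.sum_filter_ne_zero (s : Multiset ℕ) : (s.filter (· ≠ 0)).sum = s.sum := by
  rw [← Multiset.sum_filter_add_sum_filter_not (s := s) (· ≠ 0), left_eq_add]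
  exact Multiset.sum_eq_zero fun a ha => by simpa using (Multiset.mem_filter.1 ha).2

lemma card_filter_lt_le (X : Finset ℕ) (a : ℕ) : #(X.filter (· < a)) ≤ a :=
  (card_le_card fun _ hb => mem_range.2 (mem_filter.1 hb).2).trans (card_range a).le

lemma sum_card_filter_lt (X : Finset ℕ) :
    ∑ a ∈ X, #(X.filter (· < a)) = ∑ i ∈ range #X, i := by
  induction X using Finset.induction_on_max with
  | empty => simp
  | insert a s ha ih =>
    have hs : ∀ x ∈ s, #((insert a s).filter (· < x)) = #(s.filter (· < x)) := fun x hx => by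
      rw [filter_insert, if_neg (ha x hx).not_gt]
    have ha' : a ∉ s := fun h => (ha a h).false
    rw [sum_insert ha', sum_congr rfl hs, ih, card_insert_of_notMem ha', sum_range_succ,
      filter_insert, if_neg (lt_irrefl a), filter_true_of_mem ha, add_comm]

lemma sum_partitionOf_add_sum_range_card (X : Finset ℕ) :
    (partitionOf X).sum + ∑ i ∈ range #X, i = ∑ a ∈ X, a := by
  rw [partitionOf, Multiset.sum_filter_ne_zero, ← sum_card_filter_lt,
    ← Finset.sum_eq_multiset_sum, ← sum_add_distrib]
  exact sum_congr rfl fun a _ => Nat.sub_add_cancel (card_filter_lt_le X a)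

lemma sum_add_sum_range_card_eq_of_partitionOf_eq {A B : Finset ℕ}
    (h : partitionOf A = partitionOf B) :
    ∑ a ∈ A, a + ∑ i ∈ range #B, i = ∑ b ∈ B, b + ∑ i ∈ range #A, i := by
  have hA := sum_partitionOf_add_sum_range_card A
  have hB := sum_partitionOf_add_sum_range_card B
  rw [h] at hA
  omega

lemma sum_range_mul_id (d r : ℕ) :
    ∑ i ∈ range (d * r), i = d * d * ∑ i ∈ range r, i + r * ∑ i ∈ range d, i := by
  induction r with
  | zero => simp
  | succ r ih =>
    rw [mul_add_one, sum_range_add, ih, sum_add_distrib, sum_const, card_range, smul_eq_mul,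
      sum_range_succ]
    ring

lemma sum_sdInv {d : ℕ} (S : Fin d → Finset ℕ) (f : ℕ → ℕ) :
    ∑ a ∈ sdInv d S, f a = ∑ i, ∑ k ∈ S i, f (i + k * d) := by
  have hinj (i : Fin d) : Function.Injective fun k : ℕ => (i : ℕ) + k * d := fun k l h =>
    Nat.eq_of_mul_eq_mul_right i.pos (Nat.add_left_cancel h)
  have hdisj : ((univ : Finset (Fin d)) : Set (Fin d)).PairwiseDisjoint
      fun i => (S i).image fun k => (i : ℕ) + k * d := by
    intro i _ j _ hij
    refine disjoint_left.2 fun a hi hj => hij ?_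
    obtain ⟨k, -, rfl⟩ := mem_image.1 hi
    obtain ⟨l, -, h⟩ := mem_image.1 hj
    have := congrArg (· % d) h
    simp only [Nat.add_mul_mod_self_right, Nat.mod_eq_of_lt i.isLt, Nat.mod_eq_of_lt j.isLt]
      at this
    exact Fin.ext this.symm
  rw [sdInv, sum_biUnion hdisj]
  exact sum_congr rfl fun i _ => sum_image fun k _ l _ h => hinj i h

lemma sdInv_sd {d : ℕ} (hd : 0 < d) (X : Finset ℕ) : sdInv d (sd d X) = X := by
  ext a
  simp only [sdInv, sd, mem_biUnion, mem_univ, true_and, mem_image, mem_filter]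
  constructor
  · rintro ⟨i, _, ⟨b, ⟨hb, hbi⟩, rfl⟩, rfl⟩
    rwa [← hbi, Nat.mod_add_div']
  · intro ha
    exact ⟨⟨a % d, Nat.mod_lt a hd⟩, a / d, ⟨a, ⟨ha, rfl⟩, rfl⟩, Nat.mod_add_div' a d⟩

lemma sum_partitionOf_sdInv_add_sum_range {d : ℕ} (S : Fin d → Finset ℕ) :
    (partitionOf (sdInv d S)).sum + ∑ i ∈ range (∑ j, #(S j)), i =
      ∑ j, #(S j) * j + d * ∑ j, ∑ k ∈ S j, k := by
  have hcard : #(sdInv d S) = ∑ j, #(S j) := by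
    simpa using sum_sdInv S fun _ => 1
  rw [← hcard, sum_partitionOf_add_sum_range_card, sum_sdInv S fun a => a, mul_sum,
    ← sum_add_distrib]
  refine sum_congr rfl fun j _ => ?_
  rw [sum_add_distrib, sum_const, smul_eq_mul, mul_sum]
  simp only [mul_comm]

lemma sum_partitionOf_sdInv_add_sum_range_of_card_eq {d r : ℕ} {S : Fin d → Finset ℕ}
    (h : ∀ i, #(S i) = r) :
    (partitionOf (sdInv d S)).sum + ∑ i ∈ range (d * r), i =
      r * ∑ i ∈ range d, i + d * ∑ j, ∑ k ∈ S j, k := by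
  have := sum_partitionOf_sdInv_add_sum_range S
  simp only [h, sum_const, card_univ, Fintype.card_fin, smul_eq_mul, ← mul_sum] at this
  rwa [Fin.sum_univ_eq_sum_range (·) d] at this

lemma sum_partitionOf_sdInv_coreSymbol_add_sum_range {d : ℕ} (S : Fin d → Finset ℕ) :
    (partitionOf (sdInv d (coreSymbol S))).sum + ∑ i ∈ range (∑ j, #(S j)), i =
      ∑ j, #(S j) * j + d * ∑ j, ∑ k ∈ range #(S j), k := by
  simpa [coreSymbol] using sum_partitionOf_sdInv_add_sum_range (coreSymbol S)

/-- `|p(X)| = |q_d(X)| + |c_d(X)|`: the size of the partition of a β-set `X` is the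
size of its `d`-quotient partition `q_d(X) = p(Q(s_d X))` plus the size of its
`d`-core partition `c_d(X) = p(C(s_d X))` (where `p` of a symbol `T` is
`p(s_d⁻¹ T)`). -/
theorem partition_sum_eq_quot_add_core (d : ℕ) (hd : 0 < d) (X : Finset ℕ)
    (Y : Fin d → Finset ℕ) (hY : IsBalancedQuotient (sd d X) Y) :
    (partitionOf X).sum =
      (partitionOf (sdInv d Y)).sum + (partitionOf (sdInv d (coreSymbol (sd d X)))).sum := by
  set S := sd d X
  have hYcard (j : Fin d) : #(Y j) = quotCard S := (hY j).1
  have hX := sum_partitionOf_sdInv_add_sum_range S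
  rw [sdInv_sd hd] at hX
  have hQ := sum_partitionOf_sdInv_add_sum_range_of_card_eq hYcard
  have hC := sum_partitionOf_sdInv_coreSymbol_add_sum_range S
  have hcomp : ∑ j, ∑ k ∈ Y j, k + ∑ j, ∑ i ∈ range #(S j), i =
      ∑ j, ∑ k ∈ S j, k + d * ∑ i ∈ range (quotCard S), i := by
    rw [← sum_add_distrib, sum_congr rfl fun j _ =>
      sum_add_sum_range_card_eq_of_partitionOf_eq (hY j).2]
    simp only [hYcard, sum_add_distrib, sum_const, card_univ, Fintype.card_fin, smul_eq_mul]
  linear_combination hX - hQ - hC + sum_range_mul_id d (quotCard S) - d * hcomp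
end

section
/- Let S be a d-symbol with balanced quotient Q(S) and core C(S). Then |H(S)| = |H(Q(S))| + |H(C(S))|, i.e., the number of hooks of S equals the number of hooks of its balanced quotient plus the number of hooks of its core. -/
/-! The hook count of a symbol splits over pairs of positions `{i, j}`, and the contribution of a
pair depends only on the two β-sets there (`crossHookCount`). Replacing `X` by `X^{+1}` changes
that contribution by an amount depending only on the cardinalities, hence by the same amount as
for the core. Shifting every `X_i` up to a common cardinality `N` turns `S` and `Q(S)` into the
same symbol, because a β-set is determined by its cardinality and its partition, while it turns
the core into `([N], …, [N])`, whose cross hook counts vanish. -/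

open Finset

section ShiftUp

variable (X Y : Finset ℕ)

lemma shiftUp_zero : shiftUp X 0 = X := by
  simp [shiftUp]

lemma shiftUp_one : shiftUp X 1 = insert 0 (X.map (addRightEmbedding 1)) := by
  ext n
  cases n <;> simp [shiftUp]

lemma shiftUp_shiftUp_one (s : ℕ) : shiftUp (shiftUp X s) 1 = shiftUp X (s + 1) := by
  ext n
  simp only [shiftUp, mem_union, mem_image, mem_range]
  constructor
  · rintro (⟨_, ⟨a, ha, rfl⟩ | h, rfl⟩ | h)
    exacts [Or.inl ⟨a, ha, by omega⟩, Or.inr (by omega), Or.inr (by omega)]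
  · rintro (⟨a, ha, rfl⟩ | h)
    · exact Or.inl ⟨a + s, Or.inl ⟨a, ha, rfl⟩, by omega⟩
    · rcases n with _ | n
      · exact Or.inr (by omega)
      · exact Or.inl ⟨n, Or.inr (by omega), rfl⟩

lemma card_shiftUp (s : ℕ) : #(shiftUp X s) = #X + s := by
  rw [shiftUp, card_union_of_disjoint, card_image_of_injective _ (add_left_injective s),
    card_range]
  simp only [disjoint_left, mem_image, mem_range]
  omega

lemma shiftUp_range (n s : ℕ) : shiftUp (range n) s = range (n + s) := by
  ext m
  simp only [shiftUp, mem_union, mem_image, mem_range]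
  constructor
  · omega
  · intro h
    by_cases hm : m < s
    · exact Or.inr hm
    · exact Or.inl ⟨m - s, by omega, by omega⟩

lemma sum_shiftUp_one {M : Type*} [AddCommMonoid M] (f : ℕ → M) :
    ∑ a ∈ shiftUp X 1, f a = f 0 + ∑ a ∈ X, f (a + 1) := by
  rw [shiftUp_one, sum_insert (by simp), sum_map]
  rfl

lemma card_shiftUp_one_sdiff_shiftUp_one : #(shiftUp X 1 \ shiftUp Y 1) = #(X \ Y) := by
  rw [shiftUp_one, shiftUp_one, insert_sdiff_insert, sdiff_insert_of_notMem (by simp),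
    ← Finset.map_sdiff, card_map]

end ShiftUp

def hookCount (X Y : Finset ℕ) : ℕ := ∑ a ∈ X, #(range a \ Y)

/-- For `j < i`, the number of hooks of a symbol at the positions `(i, j)` and `(j, i)`, where
`X` and `Y` sit at `i` and `j`. -/
def crossHookCount (X Y : Finset ℕ) : ℕ := hookCount X Y + hookCount Y X + #(X \ Y)

section HookCount

variable (X Y : Finset ℕ)

lemma card_sdiff_eq_sum : #(X \ Y) = ∑ a ∈ X, if a ∈ Y then 0 else 1 := by
  rw [sdiff_eq_filter, card_filter]
  exact sum_congr rfl fun a _ => by split_ifs <;> simp_all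

lemma card_range_add_one_sdiff (a : ℕ) :
    #(range (a + 1) \ Y) = #(range a \ Y) + if a ∈ Y then 0 else 1 := by
  by_cases h : a ∈ Y
  · simp [range_add_one, insert_sdiff_of_mem, h]
  · simp [range_add_one, insert_sdiff_of_notMem, h]

lemma sum_card_range_add_one_sdiff :
    ∑ a ∈ X, #(range (a + 1) \ Y) = hookCount X Y + #(X \ Y) := by
  rw [hookCount, card_sdiff_eq_sum, ← sum_add_distrib]
  simp only [card_range_add_one_sdiff]

lemma hookCount_shiftUp_one_left : hookCount (shiftUp X 1) Y = hookCount X Y + #(X \ Y) := by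
  rw [hookCount, sum_shiftUp_one, range_zero, empty_sdiff, card_empty, zero_add,
    sum_card_range_add_one_sdiff]

lemma hookCount_shiftUp_one_right :
    hookCount X (shiftUp Y 1) + #(X \ shiftUp Y 1) = hookCount X Y := by
  rw [hookCount, card_sdiff_eq_sum, ← sum_add_distrib, hookCount]
  refine sum_congr rfl fun a _ => ?_
  rw [← card_range_add_one_sdiff, ← shiftUp_range, card_shiftUp_one_sdiff_shiftUp_one]

lemma crossHookCount_shiftUp_one_left :
    crossHookCount (shiftUp X 1) Y + #Y = crossHookCount X Y + #X + 1 := by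
  have hX := hookCount_shiftUp_one_left X Y
  have hY := hookCount_shiftUp_one_right Y X
  have h₁ := card_sdiff_add_card (shiftUp X 1) Y
  have h₂ := card_sdiff_add_card Y (shiftUp X 1)
  have h₃ := card_sdiff_add_card X Y
  have h₄ := card_sdiff_add_card Y X
  rw [union_comm] at h₂ h₄
  simp only [crossHookCount, card_shiftUp] at *
  omega

lemma crossHookCount_shiftUp_one_right :
    crossHookCount X (shiftUp Y 1) + #X = crossHookCount X Y + #Y := by
  have hX := hookCount_shiftUp_one_right X Y
  have hY := hookCount_shiftUp_one_left Y X
  have h₁ := card_sdiff_add_card X Y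
  have h₂ := card_sdiff_add_card Y X
  rw [union_comm] at h₂
  simp only [crossHookCount] at *
  omega

lemma crossHookCount_range_self (n : ℕ) : crossHookCount (range n) (range n) = 0 := by
  have h : hookCount (range n) (range n) = 0 := sum_eq_zero fun a ha =>
    card_eq_zero.2 (sdiff_eq_empty_iff_subset.2 (range_subset_range.2 (mem_range.1 ha).le))
  simp [crossHookCount, h]

lemma crossHookCount_shiftUp_left (s : ℕ) :
    crossHookCount (shiftUp X s) Y + crossHookCount (range #X) (range #Y) =
      crossHookCount X Y + crossHookCount (range (#X + s)) (range #Y) := by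
  induction s with
  | zero => rw [shiftUp_zero, add_zero, add_comm]
  | succ s ih =>
    have hX := crossHookCount_shiftUp_one_left (shiftUp X s) Y
    have hR := crossHookCount_shiftUp_one_left (range (#X + s)) (range #Y)
    rw [shiftUp_shiftUp_one, card_shiftUp] at hX
    rw [shiftUp_range, card_range, card_range] at hR
    rw [← add_assoc]
    omega

lemma crossHookCount_shiftUp_right (t : ℕ) :
    crossHookCount X (shiftUp Y t) + crossHookCount (range #X) (range #Y) =
      crossHookCount X Y + crossHookCount (range #X) (range (#Y + t)) := by
  induction t with
  | zero => rw [shiftUp_zero, add_zero, add_comm]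
  | succ t ih =>
    have hY := crossHookCount_shiftUp_one_right X (shiftUp Y t)
    have hR := crossHookCount_shiftUp_one_right (range #X) (range (#Y + t))
    rw [shiftUp_shiftUp_one, card_shiftUp] at hY
    rw [shiftUp_range, card_range, card_range] at hR
    rw [← add_assoc]
    omega

lemma crossHookCount_shiftUp (s t : ℕ) :
    crossHookCount (shiftUp X s) (shiftUp Y t) + crossHookCount (range #X) (range #Y) =
      crossHookCount X Y + crossHookCount (range (#X + s)) (range (#Y + t)) := by
  have hl := crossHookCount_shiftUp_left X (shiftUp Y t) s
  have hr := crossHookCount_shiftUp_right X Y t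
  rw [card_shiftUp] at hl
  omega

end HookCount

lemma crossHookCount_eq_of_shiftUp_eq {X Y X' Y' : Finset ℕ} {s t u : ℕ}
    (hX : shiftUp X s = shiftUp X' u) (hY : shiftUp Y t = shiftUp Y' u) (hcard : #X' = #Y') :
    crossHookCount X Y = crossHookCount X' Y' + crossHookCount (range #X) (range #Y) := by
  have h := crossHookCount_shiftUp X Y s t
  have h' := crossHookCount_shiftUp X' Y' u u
  have hXc : #X + s = #X' + u := by rw [← card_shiftUp, hX, card_shiftUp]
  have hYc : #Y + t = #Y' + u := by rw [← card_shiftUp, hY, card_shiftUp]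
  rw [hX, hY, hXc, hYc, ← hcard, crossHookCount_range_self] at h
  rw [← hcard, crossHookCount_range_self, crossHookCount_range_self] at h'
  omega

def betaPart (X : Finset ℕ) (a : ℕ) : ℕ := a - #(X.filter (· < a))

def betaParts (X : Finset ℕ) : Multiset ℕ := X.val.map (betaPart X)

section BetaParts

variable (X : Finset ℕ)

lemma partitionOf_eq_filter_betaParts : partitionOf X = (betaParts X).filter (· ≠ 0) := rfl

lemma betaPart_shiftUp_one (a : ℕ) : betaPart (shiftUp X 1) (a + 1) = betaPart X a := by
  have h : (shiftUp X 1).filter (· < a + 1) =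
      insert 0 ((X.filter (· < a)).map (addRightEmbedding 1)) := by
    rw [shiftUp_one, filter_insert, if_pos a.succ_pos, filter_map]
    congr 2
    ext b
    simp
  rw [betaPart, betaPart, h, card_insert_of_notMem (by simp), card_map]
  omega

lemma betaParts_shiftUp_one : betaParts (shiftUp X 1) = 0 ::ₘ betaParts X := by
  rw [betaParts, shiftUp_one, insert_val_of_notMem (by simp), Multiset.map_cons, map_val,
    Multiset.map_map, betaParts, ← shiftUp_one]
  congr 1
  · simp [betaPart]
  · exact Multiset.map_congr rfl fun a _ => betaPart_shiftUp_one X a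

lemma partitionOf_shiftUp (s : ℕ) : partitionOf (shiftUp X s) = partitionOf X := by
  induction s with
  | zero => rw [shiftUp_zero]
  | succ s ih =>
    rw [← shiftUp_shiftUp_one, partitionOf_eq_filter_betaParts, betaParts_shiftUp_one,
      Multiset.filter_cons_of_neg _ (by simp), ← partitionOf_eq_filter_betaParts, ih]

lemma betaParts_eq_partitionOf_add_replicate :
    betaParts X = partitionOf X + Multiset.replicate (#X - Multiset.card (partitionOf X)) 0 := by
  have h := Multiset.filter_add_not (· ≠ 0) (betaParts X)
  rw [← partitionOf_eq_filter_betaParts] at h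
  have hzero : (betaParts X).filter (fun a => ¬a ≠ 0) =
      Multiset.replicate (#X - Multiset.card (partitionOf X)) 0 := by
    have hc := congrArg Multiset.card h
    rw [Multiset.card_add] at hc
    have hX : Multiset.card (betaParts X) = #X := Multiset.card_map _ _
    rw [Multiset.eq_replicate]
    refine ⟨by omega, fun b hb => ?_⟩
    simpa using (Multiset.mem_filter.1 hb).2
  rw [← hzero, h]

end BetaParts

section Uniqueness

variable {s : Finset ℕ} {a : ℕ}

lemma betaPart_le_of_forall_lt (hs : ∀ y ∈ s, y < a) {x : ℕ} (hx : x ∈ s) :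
    betaPart s x ≤ a - #s := by
  have hsplit := card_filter_add_card_filter_not (s := s) (· < x)
  have hupper : #(s.filter fun y => ¬y < x) ≤ a - x := by
    rw [← Nat.card_Ico x a]
    exact card_le_card fun y hy => by
      simp only [mem_filter] at hy
      exact mem_Ico.2 ⟨by omega, hs y hy.1⟩
  have := hs x hx
  rw [betaPart]
  omega

lemma betaParts_insert_of_forall_lt (hs : ∀ y ∈ s, y < a) :
    betaParts (insert a s) = (a - #s) ::ₘ betaParts s := by
  have ha : a ∉ s := fun h => lt_irrefl a (hs a h)
  rw [betaParts, insert_val_of_notMem ha, Multiset.map_cons, betaParts]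
  congr 1
  · rw [betaPart, filter_insert, if_neg (lt_irrefl a), filter_true_of_mem hs]
  · refine Multiset.map_congr rfl fun x hx => ?_
    rw [betaPart, betaPart, filter_insert, if_neg (hs x hx).not_gt]

lemma le_of_mem_betaParts_insert (hs : ∀ y ∈ s, y < a) {p : ℕ}
    (hp : p ∈ betaParts (insert a s)) : p ≤ a - #s := by
  rw [betaParts_insert_of_forall_lt hs, Multiset.mem_cons] at hp
  obtain rfl | hp := hp
  · exact le_rfl
  · obtain ⟨x, hx, rfl⟩ := Multiset.mem_map.1 hp
    exact betaPart_le_of_forall_lt hs hx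

lemma card_le_of_forall_lt (hs : ∀ y ∈ s, y < a) : #s ≤ a := by
  simpa using card_le_card fun y hy => mem_range.2 (hs y hy)

end Uniqueness

/-- The largest element of a β-set is its largest part plus the number of remaining elements. -/
lemma eq_of_betaParts_eq {X Y : Finset ℕ} (h : betaParts X = betaParts Y) : X = Y := by
  induction X using Finset.induction_on_max generalizing Y with
  | empty =>
    simpa [betaParts, eq_comm] using h
  | insert a s hs ih =>
    have hY : Y.Nonempty := by
      rw [← card_pos, ← card_val, ← Multiset.card_map (betaPart Y), ← betaParts, ← h,
        betaParts_insert_of_forall_lt hs]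
      exact Multiset.card_pos.2 Multiset.cons_ne_zero
    set M := Y.max' hY
    have hs' : ∀ y ∈ Y.erase M, y < M := fun y => Y.lt_max'_of_mem_erase_max' hY
    rw [← insert_erase (Y.max'_mem hY)] at h ⊢
    have hhead : a - #s = M - #(Y.erase M) := by
      refine le_antisymm (le_of_mem_betaParts_insert hs' ?_) (le_of_mem_betaParts_insert hs ?_)
      · rw [← h, betaParts_insert_of_forall_lt hs]
        exact Multiset.mem_cons_self _ _
      · rw [h, betaParts_insert_of_forall_lt hs']
        exact Multiset.mem_cons_self _ _
    rw [betaParts_insert_of_forall_lt hs, betaParts_insert_of_forall_lt hs', hhead,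
      Multiset.cons_inj_right] at h
    obtain rfl := ih h
    have := card_le_of_forall_lt hs
    have := card_le_of_forall_lt hs'
    rw [show a = M by omega]

lemma eq_of_card_eq_of_partitionOf_eq {X Y : Finset ℕ} (hcard : #X = #Y)
    (hpart : partitionOf X = partitionOf Y) : X = Y :=
  eq_of_betaParts_eq (by
    rw [betaParts_eq_partitionOf_add_replicate, betaParts_eq_partitionOf_add_replicate Y, hcard,
      hpart])

def pairHookCount {ι : Type*} [LinearOrder ι] (T : ι → Finset ℕ) (i j : ι) : ℕ :=
  hookCount (T i) (T j) + if j < i then #(T i \ T j) else 0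

lemma sum_sum_ite_hook_eq (X Y : Finset ℕ) {M : ℕ} (hX : X ⊆ range M) (c : Prop) [Decidable c] :
    ∑ a ∈ range M, ∑ b ∈ range M, (if a ∈ X ∧ b ∉ Y ∧ (b < a ∨ a = b ∧ c) then 1 else 0) =
      hookCount X Y + if c then #(X \ Y) else 0 := by
  have hrow : ∀ a ∈ range M,
      ∑ b ∈ range M, (if a ∈ X ∧ b ∉ Y ∧ (b < a ∨ a = b ∧ c) then 1 else 0) =
        if a ∈ X then #(range (a + if c then 1 else 0) \ Y) else 0 := by
    intro a ha
    rw [mem_range] at ha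
    by_cases haX : a ∈ X
    · rw [if_pos haX, ← card_filter]
      congr 1
      ext b
      by_cases hc : c <;> simp [haX, hc] <;> grind
    · simp [haX]
  rw [sum_congr rfl hrow, sum_ite_mem, inter_eq_right.2 hX]
  split_ifs
  · exact sum_card_range_add_one_sdiff X Y
  · rfl

lemma card_symbolHooks {d : ℕ} (S : Fin d → Finset ℕ) :
    #(symbolHooks S) = ∑ i, ∑ j, pairHookCount S i j := by
  have hsub : ∀ i, S i ⊆ range ((univ.sup fun i => (S i).sup id) + 1) := fun i a ha =>
    mem_range.2 (Nat.lt_succ_of_le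
      ((le_sup (f := id) ha).trans (le_sup (f := fun i => (S i).sup id) (mem_univ i))))
  rw [symbolHooks, card_filter, sum_product_right, sum_product_right, sum_product]
  refine sum_congr rfl fun i _ => sum_congr rfl fun j _ => ?_
  rw [sum_comm]
  exact sum_sum_ite_hook_eq (S i) (S j) (hsub i) (j < i)

lemma pairHookCount_add_swap {ι : Type*} [LinearOrder ι] (T : ι → Finset ℕ) (i j : ι) :
    pairHookCount T i j + pairHookCount T j i = crossHookCount (T (max i j)) (T (min i j)) := by
  rcases lt_trichotomy i j with h | rfl | h
  · simp only [pairHookCount, crossHookCount, max_eq_right h.le, min_eq_left h.le, if_pos h,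
      if_neg h.not_gt]
    ring
  · simp [pairHookCount, crossHookCount]
  · simp only [pairHookCount, crossHookCount, max_eq_left h.le, min_eq_right h.le, if_pos h,
      if_neg h.not_gt]
    ring

lemma sum_sum_eq_of_add_swap_eq {ι : Type*} [Fintype ι] {F G : ι → ι → ℕ}
    (h : ∀ i j, F i j + F j i = G i j + G j i) : ∑ i, ∑ j, F i j = ∑ i, ∑ j, G i j := by
  have hsymm : ∀ H : ι → ι → ℕ,
      ∑ i, ∑ j, H i j + ∑ i, ∑ j, H i j = ∑ i, ∑ j, (H i j + H j i) := fun H => by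
    nth_rewrite 2 [sum_comm]
    simp only [← sum_add_distrib]
  have := hsymm F
  rw [sum_congr rfl fun i _ => sum_congr rfl fun j _ => h i j, ← hsymm G] at this
  omega

theorem card_hooks_eq_quot_add_core_general (d : ℕ) (S : Fin d → Finset ℕ)
    (Y : Fin d → Finset ℕ) (hY : IsBalancedQuotient S Y) :
    (symbolHooks S).card = (symbolHooks Y).card + (symbolHooks (coreSymbol S)).card := by
  set N := quotCard S + ∑ i, #(S i)
  have hS : ∀ i, #(S i) ≤ N := fun i =>
    le_add_left (single_le_sum (f := fun i => #(S i)) (fun i _ => Nat.zero_le _) (mem_univ i))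
  have hshift : ∀ i, shiftUp (S i) (N - #(S i)) = shiftUp (Y i) (N - quotCard S) := fun i =>
    eq_of_card_eq_of_partitionOf_eq
      (by rw [card_shiftUp, card_shiftUp, (hY i).1]; have := hS i; omega)
      (by rw [partitionOf_shiftUp, partitionOf_shiftUp, (hY i).2])
  have hcross : ∀ i j, crossHookCount (S i) (S j) =
      crossHookCount (Y i) (Y j) + crossHookCount (coreSymbol S i) (coreSymbol S j) :=
    fun i j => crossHookCount_eq_of_shiftUp_eq (hshift i) (hshift j) ((hY i).1.trans (hY j).1.symm)
  simp only [card_symbolHooks, ← sum_add_distrib]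
  refine sum_sum_eq_of_add_swap_eq fun i j => ?_
  rw [add_add_add_comm, pairHookCount_add_swap, pairHookCount_add_swap, pairHookCount_add_swap,
    hcross]

/-- The number of hooks of a `d`-symbol `S` equals the number of hooks of its
balanced quotient `Q(S)` plus the number of hooks of its core `C(S)`. -/
theorem card_hooks_eq_quot_add_core (d : ℕ) (hd : 0 < d) (S : Fin d → Finset ℕ)
    (Y : Fin d → Finset ℕ) (hY : IsBalancedQuotient S Y) :
    (symbolHooks S).card = (symbolHooks Y).card + (symbolHooks (coreSymbol S)).card :=
  card_hooks_eq_quot_add_core_general d S Y hY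
end
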